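/- Let {0} ≠ a ⊆ A be a nonzero ideal. Then there exists a ℤ-unimodular matrix T ∈ ℤ^{n×n} such that the canonical ring homomorphism A_{n−1}/(φ_T(a) ∩ A_{n−1}) → A/φ_T(a) is injective and integral; equivalently, A/φ_T(a) contains A_{n−1}/(φ_T(a) ∩ A_{n−1}) as a subring and A/φ_T(a) is a finitely generated module over A_{n−1}/(φ_T(a) ∩ A_{n−1}). -/

import Mathlib

set_option synthInstance.maxHeartbeats 1000000
set_option maxHeartbeats 1000000

noncomputable section

/-- The Laurent polynomial ring `A = ℝ[σ₁^{±1},…,σₙ^{±1}]` in `n` indeterminates,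
realized as the group algebra of `ℤⁿ` over `ℝ`. -/
abbrev LP (n : ℕ) : Type := AddMonoidAlgebra ℝ (Fin n → ℤ)

/-- The monomial `σ^ν` for `ν ∈ ℤⁿ`. -/
def mono {n : ℕ} (ν : Fin n → ℤ) : LP n := AddMonoidAlgebra.single ν 1

/-- The Laurent polynomial subring `A_d = ℝ[σ₁^{±1},…,σ_d^{±1}]` in the first `d`
indeterminates, as a subalgebra of `A`: it is generated by the monomials `σ^ν`
with `ν` supported on the first `d` coordinates. -/
def subA (n d : ℕ) : Subalgebra ℝ (LP n) :=
  Algebra.adjoin ℝ {x | ∃ ν : Fin n → ℤ, (∀ i : Fin n, d ≤ (i : ℕ) → ν i = 0) ∧ x = mono ν}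

/-- The index of the variable `σ_{d+j}` for `1 ≤ j ≤ n-d` (0-indexed: `j : Fin (n-d)`). -/
def embIdx {n : ℕ} (d : ℕ) (j : Fin (n - d)) : Fin n :=
  ⟨d + (j : ℕ), by have := j.isLt; omega⟩

/-- The variable `σ_{d+j}` as an element of `A`. -/
def sigmaVar {n : ℕ} (d : ℕ) (j : Fin (n - d)) : LP n := mono (Pi.single (embIdx d j) 1)

/-- The action of a Laurent polynomial `f ∈ A` on a scalar trajectory `w : ℤⁿ → ℝ`:
`(σ^{ν'} w)(ν) = w(ν + ν')`, extended `ℝ`-linearly. -/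
def actS {n : ℕ} (f : LP n) (w : (Fin n → ℤ) → ℝ) : (Fin n → ℤ) → ℝ :=
  fun ν => Finsupp.sum f.coeff fun μ c => c * w (ν + μ)

/-- The action of a row vector `r ∈ A^q` on a vector trajectory `w : ℤⁿ → ℝ^q`:
`r·w = Σᵢ rᵢ·wᵢ`. -/
def actRow {n q : ℕ} (r : Fin q → LP n) (w : (Fin n → ℤ) → Fin q → ℝ) : (Fin n → ℤ) → ℝ :=
  fun ν => ∑ j, actS (r j) (fun μ => w μ j) ν

/-- The componentwise action of a matrix `P ∈ A^{a×b}` on a trajectory `w : ℤⁿ → ℝ^b`. -/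
def actMat {n a b : ℕ} (P : Matrix (Fin a) (Fin b) (LP n)) (w : (Fin n → ℤ) → Fin b → ℝ) :
    (Fin n → ℤ) → Fin a → ℝ :=
  fun ν i => actRow (P i) w ν

/-- The behavior of a submodule `R ⊆ A^q`:
`B(R) = {w : ℤⁿ → ℝ^q | r·w = 0 for all r ∈ R}`. -/
def Behavior {n q : ℕ} (R : Submodule (LP n) (Fin q → LP n)) :
    Set ((Fin n → ℤ) → Fin q → ℝ) :=
  {w | ∀ r ∈ R, actRow r w = 0}

/-- A matrix `T ∈ ℤ^{n×n}` is ℤ-unimodular if `det T = ±1`. -/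
def Unimodular {n : ℕ} (T : Matrix (Fin n) (Fin n) ℤ) : Prop := T.det = 1 ∨ T.det = -1

/-- The `ℝ`-algebra endomorphism `φ_T : A → A` induced by `T ∈ ℤ^{n×n}`,
determined by `φ_T(σ^ν) = σ^{Tν}`. -/
def phiT {n : ℕ} (T : Matrix (Fin n) (Fin n) ℤ) : LP n →ₐ[ℝ] LP n :=
  AddMonoidAlgebra.mapDomainAlgHom ℝ ℝ T.mulVecLin.toAddMonoidHom

/-- The image `φ̂_T(R)` of a submodule `R ⊆ A^q` under the componentwise extension
`φ̂_T : A^q → A^q` of `φ_T` (the span is taken only to record that it is a submodule;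
for unimodular `T` the image is already a submodule). -/
def hatPhiT {n q : ℕ} (T : Matrix (Fin n) (Fin n) ℤ) (R : Submodule (LP n) (Fin q → LP n)) :
    Submodule (LP n) (Fin q → LP n) :=
  Submodule.span (LP n) ((fun r (i : Fin q) => phiT T (r i)) '' (R : Set (Fin q → LP n)))

/-- The annihilator ideal `ann(A^q/R) = {f ∈ A | f·v ∈ R for all v ∈ A^q}`. -/
def annQ {n q : ℕ} (R : Submodule (LP n) (Fin q → LP n)) : Ideal (LP n) :=
  Submodule.colon R ⊤

/-- The monomial `σ₁^{ν₁}⋯σ_d^{ν_d}` (the part of `σ^ν` in the first `d` variables),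
as an element of `A_d`. -/
def monoD (n d : ℕ) (ν : Fin n → ℤ) : subA n d :=
  ⟨mono (fun i => if (i : ℕ) < d then ν i else 0),
   Algebra.subset_adjoin
     ⟨fun i => if (i : ℕ) < d then ν i else 0, fun i hi => if_neg (by omega), rfl⟩⟩


/-! For `M` larger than twice every exponent of a fixed `f ≠ 0` in `a`, the unimodular `T` with last
row `(M^m, …, M, 1)` gives the exponents of `φ_T f` pairwise distinct last coordinates, by
uniqueness of base-`M` digits. So `φ_T f` has a unique exponent with largest last coordinate and a
unique one with smallest: normalising at these, `σₙ` and `σₙ⁻¹` are roots modulo `φ_T(a)` of monic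
polynomials over `A_{n-1}`. As `A` is generated by `A_{n-1}` and `σₙ^{±1}`, the extension is
integral; it is injective because `φ_T(a) ∩ A_{n-1}` is the kernel. -/

open Polynomial Matrix

lemma isIntegral_quotientMap_of_closure_eq_top {R S : Type*} [CommRing R] [CommRing S]
    {f : R →+* S} {I : Ideal S} {s : Set S} (hs : Subring.closure (Set.range f ∪ s) = ⊤)
    (hs_int : ∀ x ∈ s, ∃ p : R[X], p.Monic ∧ p.eval₂ f x ∈ I) :
    (Ideal.quotientMap I f le_rfl).IsIntegral := by
  let _ : Algebra (R ⧸ I.comap f) (S ⧸ I) := (Ideal.quotientMap I f le_rfl).toAlgebra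
  set K := (integralClosure (R ⧸ I.comap f) (S ⧸ I)).toSubring.comap (Ideal.Quotient.mk I)
  have hK : Subring.closure (Set.range f ∪ s) ≤ K := by
    refine Subring.closure_le.mpr (Set.union_subset ?_ ?_)
    · rintro _ ⟨r, rfl⟩
      show IsIntegral (R ⧸ I.comap f) (Ideal.Quotient.mk I (f r))
      rw [← Ideal.quotientMap_mk (H := le_rfl)]
      exact isIntegral_algebraMap
    · intro x hx
      obtain ⟨p, hp, hpx⟩ := hs_int x hx
      refine ⟨p.map (Ideal.Quotient.mk (I.comap f)), hp.map _, ?_⟩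
      rw [eval₂_map, RingHom.algebraMap_toAlgebra, Ideal.quotientMap_comp_mk le_rfl, ← hom_eval₂]
      exact Ideal.Quotient.eq_zero_iff_mem.mpr hpx
  intro z
  obtain ⟨x, rfl⟩ := Ideal.Quotient.mk_surjective z
  exact hK (hs ▸ Subring.mem_top x)

lemma eq_zero_of_sum_pow_mul_eq_zero {M : ℤ} :
    ∀ {n : ℕ} {d : Fin n → ℤ}, (∀ i, |d i| < M) → ∑ i : Fin n, M ^ (i : ℕ) * d i = 0 → d = 0
  | 0, _, _, _ => Subsingleton.elim _ _
  | n + 1, d, hd, hsum => by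
    rw [Fin.sum_univ_succ] at hsum
    simp only [Fin.val_zero, pow_zero, one_mul, Fin.val_succ, pow_succ', mul_assoc,
      ← Finset.mul_sum] at hsum
    have hd0 : d 0 = 0 := Int.eq_zero_of_abs_lt_dvd
      ⟨-∑ i : Fin n, M ^ (i : ℕ) * d i.succ, by linear_combination hsum⟩ (hd 0)
    have hM : M ≠ 0 := ((abs_nonneg _).trans_lt (hd 0)).ne'
    have htail := eq_zero_of_sum_pow_mul_eq_zero (d := fun i => d i.succ) (fun i => hd _)
      (by simpa [hd0, hM] using hsum)
    funext i
    induction i using Fin.cases with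
    | zero => exact hd0
    | succ i => exact congrFun htail i

lemma exists_dotProduct_injOn (m : ℕ) (s : Finset (Fin (m + 1) → ℤ)) :
    ∃ c : Fin (m + 1) → ℤ, c (Fin.last m) = 1 ∧ Set.InjOn (c ⬝ᵥ ·) s := by
  set B := ∑ ν ∈ s, ∑ i, |ν i|
  have hB : ∀ ν ∈ s, ∀ i, |ν i| ≤ B := fun ν hν i =>
    (Finset.single_le_sum (fun j _ => abs_nonneg (ν j)) (Finset.mem_univ i)).trans
      (Finset.single_le_sum (f := fun ν : Fin (m + 1) → ℤ => ∑ i, |ν i|)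
        (fun _ _ => Finset.sum_nonneg fun _ _ => abs_nonneg _) hν)
  -- `c j = M ^ (m - j)` with `M = 2B + 1`: the differences `ν - μ` are base-`M` digits.
  refine ⟨fun j => (2 * B + 1) ^ (Fin.rev j : ℕ), by simp, fun ν hν μ hμ hνμ => ?_⟩
  have hdigits : ∀ i, |(ν - μ) (Fin.rev i)| < 2 * B + 1 := fun i => by
    have := abs_sub (ν (Fin.rev i)) (μ (Fin.rev i))
    simp only [Pi.sub_apply]
    linarith [hB ν hν (Fin.rev i), hB μ hμ (Fin.rev i)]
  have hsum : ∑ i : Fin (m + 1), (2 * B + 1) ^ (i : ℕ) * (ν - μ) (Fin.rev i) = 0 := by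
    rw [← Equiv.sum_comp Fin.revPerm]
    simpa [dotProduct, mul_sub, Finset.sum_sub_distrib, sub_eq_zero] using hνμ
  funext j
  simpa [sub_eq_zero] using congrFun (eq_zero_of_sum_pow_mul_eq_zero hdigits hsum) (Fin.rev j)

lemma det_updateRow_one_last {R : Type*} [CommRing R] (m : ℕ) (c : Fin (m + 1) → R) :
    (updateRow (1 : Matrix (Fin (m + 1)) (Fin (m + 1)) R) (Fin.last m) c).det = c (Fin.last m) := by
  rw [det_of_isLowerTriangular]
  · simp [Fin.prod_univ_castSucc]
  · intro i j (hij : i < j)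
    have hi : i ≠ Fin.last m := (hij.trans_le (Fin.le_last j)).ne
    simp [updateRow_ne hi, one_apply_ne hij.ne]

lemma mono_add {n : ℕ} (ν μ : Fin n → ℤ) : mono (ν + μ) = mono ν * mono μ := by
  simp [mono, AddMonoidAlgebra.single_mul_single]

lemma mono_nsmul {n : ℕ} (k : ℕ) (ν : Fin n → ℤ) : mono (k • ν) = mono ν ^ k := by
  simp [mono, AddMonoidAlgebra.single_pow]

lemma sum_coeff_smul_mono {n : ℕ} (g : LP n) : ∑ μ ∈ g.coeff.support, g.coeff μ • mono μ = g := by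
  conv_rhs => rw [← AddMonoidAlgebra.sum_coeff_single g]
  simp [Finsupp.sum, mono]

lemma monoD_zero (n d : ℕ) : monoD n d 0 = 1 := by
  ext1
  simp [monoD, mono, AddMonoidAlgebra.one_def, Pi.zero_def]

lemma LP.isUnit_of_ne_zero {x : LP 0} (hx : x ≠ 0) : IsUnit x := by
  have hx_eq : x = algebraMap ℝ (LP 0) (x.coeff 0) := by
    refine AddMonoidAlgebra.coeff_injective (Finsupp.ext fun ν => ?_)
    rw [Subsingleton.elim ν 0]
    simp
  rw [hx_eq] at hx ⊢
  exact (isUnit_iff_ne_zero.mpr fun h => hx (by rw [h, map_zero])).map _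

section LastVariable

variable {m : ℕ}

lemma mono_eq_monoD_mul (ν : Fin (m + 1) → ℤ) :
    mono ν = (monoD (m + 1) m ν : LP (m + 1)) * mono (Pi.single (Fin.last m) (ν (Fin.last m))) := by
  rw [monoD, ← mono_add]
  congr 1
  funext i
  induction i using Fin.lastCases <;> simp

lemma closure_range_subA_union_mono_single_last_eq_top :
    Subring.closure (Set.range (subA (m + 1) m).val.toRingHom ∪
      Set.range fun ε : ℤˣ => mono (Pi.single (Fin.last m) (ε : ℤ))) = ⊤ := by
  set K := Subring.closure (Set.range (subA (m + 1) m).val.toRingHom ∪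
      Set.range fun ε : ℤˣ => mono (Pi.single (Fin.last m) (ε : ℤ)))
  have hsubA : ∀ x ∈ subA (m + 1) m, x ∈ K := fun x hx =>
    Subring.subset_closure (Or.inl ⟨⟨x, hx⟩, rfl⟩)
  have hunit : ∀ ε : ℤˣ, mono (Pi.single (Fin.last m) (ε : ℤ)) ∈ K := fun ε =>
    Subring.subset_closure (Or.inr ⟨ε, rfl⟩)
  have hlast : ∀ t : ℤ, mono (Pi.single (Fin.last m) t) ∈ K := by
    intro t
    obtain ⟨k, rfl | rfl⟩ := Int.eq_nat_or_neg t
    · simpa [← mono_nsmul, ← Pi.single_smul] using pow_mem (hunit 1) k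
    · simpa [← mono_nsmul, ← Pi.single_smul] using pow_mem (hunit (-1)) k
  have hmono : ∀ ν, mono ν ∈ K := fun ν => by
    rw [mono_eq_monoD_mul]
    exact mul_mem (hsubA _ (monoD _ _ ν).2) (hlast _)
  refine eq_top_iff.mpr fun x _ => AddMonoidAlgebra.induction_on x hmono (fun _ _ => add_mem) ?_
  intro r x hx
  rw [Algebra.smul_def]
  exact mul_mem (hsubA _ (Subalgebra.algebraMap_mem _ r)) hx

lemma monoD_mul_mono_single_last_pow {ε : ℤ} (hε : ε * ε = 1) {k N : ℕ} (hkN : k ≤ N)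
    (ν μ : Fin (m + 1) → ℤ) (hk : (k : ℤ) = ε * (ν (Fin.last m) - μ (Fin.last m))) :
    (monoD (m + 1) m (μ - ν) : LP (m + 1)) *
        mono (Pi.single (Fin.last m) ε : Fin (m + 1) → ℤ) ^ (N - k) =
      mono μ * (mono (-ν) * mono (Pi.single (Fin.last m) ε : Fin (m + 1) → ℤ) ^ N) := by
  have hexp : (N - k) • (Pi.single (Fin.last m) ε : Fin (m + 1) → ℤ) =
      Pi.single (Fin.last m) ((μ - ν) (Fin.last m)) + N • Pi.single (Fin.last m) ε := by
    rw [← Pi.single_smul, ← Pi.single_smul, ← Pi.single_add]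
    congr 1
    simp only [nsmul_eq_mul, Nat.cast_sub hkN, hk, Pi.sub_apply]
    linear_combination (μ (Fin.last m) - ν (Fin.last m)) * hε
  rw [← mono_nsmul, hexp, mono_add, ← mul_assoc, ← mono_eq_monoD_mul, ← mono_nsmul,
    sub_eq_add_neg, mono_add, mul_assoc]

lemma exists_monic_dvd_eval₂_mono_single_last {g : LP (m + 1)} {ν₀ : Fin (m + 1) → ℤ}
    (hν₀ : ν₀ ∈ g.coeff.support) {ε : ℤ} (hε : ε * ε = 1)
    (hmax : ∀ μ ∈ g.coeff.support, μ ≠ ν₀ → ε * μ (Fin.last m) < ε * ν₀ (Fin.last m)) :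
    ∃ p : (subA (m + 1) m)[X], p.Monic ∧
      g ∣ p.eval₂ (subA (m + 1) m).val.toRingHom (mono (Pi.single (Fin.last m) ε)) := by
  classical
  set u : LP (m + 1) := mono (Pi.single (Fin.last m) ε)
  set c := g.coeff ν₀
  have hc : c ≠ 0 := Finsupp.mem_support_iff.mp hν₀
  set k : (Fin (m + 1) → ℤ) → ℕ := fun μ => (ε * (ν₀ (Fin.last m) - μ (Fin.last m))).toNat
  have hdepth : ∀ μ ∈ g.coeff.support, μ ≠ ν₀ → 0 < ε * (ν₀ (Fin.last m) - μ (Fin.last m)) :=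
    fun μ hμ hne => by rw [mul_sub]; linarith [hmax μ hμ hne]
  have hk_pos : ∀ μ ∈ g.coeff.support, μ ≠ ν₀ → 0 < k μ := fun μ hμ hne =>
    Int.lt_toNat.mpr (hdepth μ hμ hne)
  have hk : ∀ μ ∈ g.coeff.support, (k μ : ℤ) = ε * (ν₀ (Fin.last m) - μ (Fin.last m)) :=
    fun μ hμ => Int.toNat_of_nonneg <| by
      rcases eq_or_ne μ ν₀ with rfl | hne
      · simp
      · exact (hdepth μ hμ hne).le
  set N := g.coeff.support.sup k
  have hkN : ∀ μ ∈ g.coeff.support, k μ ≤ N := fun μ hμ => Finset.le_sup hμ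
  -- `p(u) = c⁻¹ σ^{-ν₀} u^N g`, and only the term `μ = ν₀` reaches degree `N`.
  set p : (subA (m + 1) m)[X] := ∑ μ ∈ g.coeff.support,
    C ((c⁻¹ * g.coeff μ) • monoD (m + 1) m (μ - ν₀)) * X ^ (N - k μ)
  have hdeg : p.natDegree ≤ N := natDegree_sum_le_of_forall_le _ _ fun μ _ =>
    (natDegree_C_mul_X_pow_le _ _).trans (Nat.sub_le _ _)
  have hlead : p.coeff N = 1 := by
    rw [finsetSum_coeff, Finset.sum_eq_single ν₀]
    · simp [k, c, hc, monoD_zero]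
    · intro μ hμ hne
      have := hk_pos μ hμ hne
      have := hkN μ hμ
      rw [coeff_C_mul, coeff_X_pow, if_neg (by omega), mul_zero]
    · exact fun h => absurd hν₀ h
  refine ⟨p, monic_of_natDegree_le_of_coeff_eq_one N hdeg hlead,
    c⁻¹ • (mono (-ν₀) * u ^ N), ?_⟩
  calc p.eval₂ (subA (m + 1) m).val.toRingHom u
      = ∑ μ ∈ g.coeff.support, g.coeff μ • mono μ * c⁻¹ • (mono (-ν₀) * u ^ N) := by
        rw [eval₂_finsetSum]
        refine Finset.sum_congr rfl fun μ hμ => ?_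
        rw [eval₂_mul, eval₂_C, eval₂_X_pow, smul_mul_smul_comm, mul_comm (g.coeff μ),
          ← monoD_mul_mono_single_last_pow hε (hkN μ hμ) ν₀ μ (hk μ hμ), ← smul_mul_assoc]
        rfl
    _ = g * c⁻¹ • (mono (-ν₀) * u ^ N) := by rw [← Finset.sum_mul, sum_coeff_smul_mono]

lemma exists_monic_dvd_eval₂_mono_single_last_of_injOn {g : LP (m + 1)}
    (hg : g.coeff.support.Nonempty)
    (hinj : Set.InjOn (fun ν : Fin (m + 1) → ℤ => ν (Fin.last m)) g.coeff.support)
    (ε : ℤˣ) : ∃ p : (subA (m + 1) m)[X], p.Monic ∧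
      g ∣ p.eval₂ (subA (m + 1) m).val.toRingHom (mono (Pi.single (Fin.last m) (ε : ℤ))) := by
  have hε : (ε : ℤ) * ε = 1 := by rw [← Units.val_mul, Int.units_mul_self, Units.val_one]
  obtain ⟨ν₀, hν₀, hmax⟩ := g.coeff.support.exists_max_image (fun ν => ε * ν (Fin.last m)) hg
  refine exists_monic_dvd_eval₂_mono_single_last hν₀ hε fun μ hμ hne => (hmax μ hμ).lt_of_ne ?_
  intro h
  exact hne (hinj hμ hν₀ (by simpa using h))

lemma exists_monic_dvd_eval₂_phiT_updateRow {f : LP (m + 1)} (hf : f ≠ 0) {c : Fin (m + 1) → ℤ}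
    (hc : Set.InjOn (c ⬝ᵥ ·) f.coeff.support) (ε : ℤˣ) : ∃ p : (subA (m + 1) m)[X], p.Monic ∧
      phiT (updateRow 1 (Fin.last m) c) f ∣
        p.eval₂ (subA (m + 1) m).val.toRingHom (mono (Pi.single (Fin.last m) (ε : ℤ))) := by
  classical
  set T := updateRow (1 : Matrix (Fin (m + 1)) (Fin (m + 1)) ℤ) (Fin.last m) c
  have hlast : ∀ ν, (T *ᵥ ν) (Fin.last m) = c ⬝ᵥ ν := fun ν => by simp [T, mulVec]
  have hsupp : (phiT T f).coeff.support = f.coeff.support.image T.mulVec :=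
    Finsupp.mapDomain_support_of_injOn _ fun ν hν μ hμ h => by
      have h : T *ᵥ ν = T *ᵥ μ := h
      exact hc hν hμ <| by simpa only [hlast] using congrFun h (Fin.last m)
  refine exists_monic_dvd_eval₂_mono_single_last_of_injOn ?_ ?_ ε <;> rw [hsupp]
  · exact (Finsupp.support_nonempty_iff.mpr (AddMonoidAlgebra.coeff_eq_zero.not.mpr hf)).image _
  · rw [Finset.coe_image]
    rintro _ ⟨ν, hν, rfl⟩ _ ⟨μ, hμ, rfl⟩ h
    rw [hc hν hμ (by simpa only [hlast] using h)]

end LastVariable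

/-- One-step normalization for a nonzero ideal: after a unimodular
change of coordinates, `A_{n-1}/(φ_T(a) ∩ A_{n-1}) → A/φ_T(a)` is injective and
integral. -/
theorem stmt7 (n : ℕ) (a : Ideal (LP n)) (ha : a ≠ ⊥) :
    ∃ T : Matrix (Fin n) (Fin n) ℤ, Unimodular T ∧
      Function.Injective
        (Ideal.quotientMap (Ideal.map (phiT T).toRingHom a)
          (subA n (n - 1)).val.toRingHom le_rfl) ∧
      RingHom.IsIntegral (R := subA n (n - 1) ⧸ Ideal.comap (subA n (n - 1)).val.toRingHom (Ideal.map (phiT T).toRingHom a)) (A := LP n ⧸ Ideal.map (phiT T).toRingHom a)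
        (Ideal.quotientMap (Ideal.map (phiT T).toRingHom a)
          (subA n (n - 1)).val.toRingHom le_rfl) := by
  obtain ⟨f, hf, hf0⟩ := Submodule.exists_mem_ne_zero_of_ne_bot ha
  cases n with
  | zero =>
    have htop : Ideal.map (phiT 1).toRingHom a = ⊤ :=
      Ideal.eq_top_of_isUnit_mem _ (Ideal.mem_map_of_mem _ hf) ((LP.isUnit_of_ne_zero hf0).map _)
    have := Ideal.Quotient.subsingleton_iff.mpr htop
    exact ⟨1, Or.inl det_one, Ideal.quotientMap_injective,
      RingHom.isIntegral_of_surjective _ fun _ => ⟨0, Subsingleton.elim _ _⟩⟩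
  | succ m =>
    obtain ⟨c, hc_last, hc⟩ := exists_dotProduct_injOn m f.coeff.support
    refine ⟨updateRow 1 (Fin.last m) c, Or.inl (by rw [det_updateRow_one_last, hc_last]),
      Ideal.quotientMap_injective,
      isIntegral_quotientMap_of_closure_eq_top closure_range_subA_union_mono_single_last_eq_top ?_⟩
    rintro _ ⟨ε, rfl⟩
    obtain ⟨p, hp, hdvd⟩ := exists_monic_dvd_eval₂_phiT_updateRow hf0 hc ε
    exact ⟨p, hp, Ideal.mem_of_dvd _ hdvd (Ideal.mem_map_of_mem _ hf)⟩
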